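/- arXiv:2301.06665 — 2 statements merged into one kernel-verified Lean document; each statement's English description precedes it below -/
import Mathlib

section
/- Assume α₂ ≠ 0, α₃ ≠ 0, θ ≥ 0 (so (1+θ)α₂ ≠ 0). Define Q(Z,Y,W,R) = (α₀ + α₃Y − γ₀ − γ₂W − γ₃R)/((1+θ)(α₁+α₂Z)+γ₁). If real numbers χ₁,χ₂,χ₃,χ₄,χ₅ satisfy χ₁·Z·Q(Z,Y,W,R) + χ₂·Q(Z,Y,W,R) + χ₃·W + χ₄·R + χ₅ = 0 for all (Z,Y,W,R) ∈ ℝ⁴ with (1+θ)(α₁+α₂Z)+γ₁ ≠ 0, then χ₁ = χ₂ = χ₃ = χ₄ = χ₅ = 0. -/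
/-- Proposition 1: if χ₁·Z·Q + χ₂·Q + χ₃·W + χ₄·R + χ₅ = 0 on the
domain where the denominator is nonzero (with α₂ ≠ 0, α₃ ≠ 0, θ ≥ 0), then all χᵢ = 0. -/
theorem stmt1 (α₀ α₁ α₂ α₃ γ₀ γ₁ γ₂ γ₃ θ : ℝ)
    (hα₂ : α₂ ≠ 0) (hα₃ : α₃ ≠ 0) (hθ : 0 ≤ θ)
    (χ₁ χ₂ χ₃ χ₄ χ₅ : ℝ)
    (hrel : ∀ Z Y W R : ℝ, (1 + θ) * (α₁ + α₂ * Z) + γ₁ ≠ 0 →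
      χ₁ * (Z * ((α₀ + α₃ * Y - γ₀ - γ₂ * W - γ₃ * R) /
        ((1 + θ) * (α₁ + α₂ * Z) + γ₁)))
      + χ₂ * ((α₀ + α₃ * Y - γ₀ - γ₂ * W - γ₃ * R) /
        ((1 + θ) * (α₁ + α₂ * Z) + γ₁))
      + χ₃ * W + χ₄ * R + χ₅ = 0) :
    χ₁ = 0 ∧ χ₂ = 0 ∧ χ₃ = 0 ∧ χ₄ = 0 ∧ χ₅ = 0 := by
  have h1θ : (0:ℝ) < 1 + θ := by linarith
  have hc : (1 + θ) * α₂ ≠ 0 := mul_ne_zero (ne_of_gt h1θ) hα₂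
  set Zs : ℝ := -(((1 + θ) * α₁ + γ₁) / ((1 + θ) * α₂)) with hZs
  have hD : ∀ t : ℝ, (1 + θ) * (α₁ + α₂ * (Zs + t)) + γ₁ = (1 + θ) * α₂ * t := by
    intro t
    rw [hZs]
    field_simp
    ring
  have hDne : ∀ t : ℝ, t ≠ 0 → (1 + θ) * (α₁ + α₂ * (Zs + t)) + γ₁ ≠ 0 := by
    intro t ht
    rw [hD t]
    exact mul_ne_zero hc ht
  -- Q = 0 case: χ₃ W + χ₄ R + χ₅ = 0 for all W R
  have hzero : ∀ W R : ℝ, χ₃ * W + χ₄ * R + χ₅ = 0 := by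
    intro W R
    have h := hrel (Zs + 1) ((γ₀ - α₀ + γ₂ * W + γ₃ * R) / α₃) W R (hDne 1 one_ne_zero)
    have hnum : α₀ + α₃ * ((γ₀ - α₀ + γ₂ * W + γ₃ * R) / α₃) - γ₀ - γ₂ * W - γ₃ * R = 0 := by
      field_simp
      ring
    rw [hnum] at h
    simpa using h
  have h5 : χ₅ = 0 := by have := hzero 0 0; linarith
  have h3 : χ₃ = 0 := by have := hzero 1 0; linarith
  have h4 : χ₄ = 0 := by have := hzero 0 1; linarith
  -- Q = 1 case: χ₁ (Zs + t) + χ₂ + χ₅ = 0 for t ≠ 0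
  have hone : ∀ t : ℝ, t ≠ 0 → χ₁ * (Zs + t) + χ₂ + χ₅ = 0 := by
    intro t ht
    have hne := hDne t ht
    have h := hrel (Zs + t)
      ((γ₀ - α₀ + ((1 + θ) * (α₁ + α₂ * (Zs + t)) + γ₁)) / α₃) 0 0 hne
    have hnum : α₀ + α₃ * ((γ₀ - α₀ + ((1 + θ) * (α₁ + α₂ * (Zs + t)) + γ₁)) / α₃)
        - γ₀ - γ₂ * 0 - γ₃ * 0 = (1 + θ) * (α₁ + α₂ * (Zs + t)) + γ₁ := by
      field_simp
      ring
    rw [hnum, div_self hne] at h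
    nlinarith [h]
  have e1 := hone 1 one_ne_zero
  have e2 := hone 2 two_ne_zero
  have h1 : χ₁ = 0 := by linear_combination e2 - e1
  have h2 : χ₂ = 0 := by linear_combination e1 - (Zs + 1) * h1 - h5
  exact ⟨h1, h2, h3, h4, h5⟩
end

section
/- Assume α₂ ≠ 0, α₃ ≠ 0, θ ≥ 0, α₁ ≥ 0, γ₁ ≥ 0, and α₁ + γ₁ > 0, and restrict to Z ≥ 0 so D = (1+θ)(α₁+α₂Z)+γ₁ > 0 when α₂ > 0. Under these conditions, the five functions f₁ = Z·Q, f₂ = Q, f₃ = W, f₄ = R, f₅ = 1 on the domain {(Z,Y,W,R) : Z ≥ 0} (with Q the equilibrium quantity with zero errors) span a 5-dimensional subspace of the space of real-valued functions on the domain. -/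
/-- under the sign conditions, the functions Z·Q, Q, W, R, 1 on the domain
{Z ≥ 0} span a 5-dimensional subspace of the space of real-valued functions. -/
theorem stmt9 (α₀ α₁ α₂ α₃ γ₀ γ₁ γ₂ γ₃ θ : ℝ)
    (hα₂ : 0 < α₂) (hα₃ : α₃ ≠ 0) (hθ : 0 ≤ θ) (hα₁ : 0 ≤ α₁) (hγ₁ : 0 ≤ γ₁)
    (hsum : 0 < α₁ + γ₁) :
    Module.finrank ℝ (Submodule.span ℝ (Set.range
      (![fun p : {p : ℝ × ℝ × ℝ × ℝ // 0 ≤ p.1} =>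
          p.1.1 * ((α₀ + α₃ * p.1.2.1 - γ₀ - γ₂ * p.1.2.2.1 - γ₃ * p.1.2.2.2) /
            ((1 + θ) * (α₁ + α₂ * p.1.1) + γ₁)),
        fun p => (α₀ + α₃ * p.1.2.1 - γ₀ - γ₂ * p.1.2.2.1 - γ₃ * p.1.2.2.2) /
            ((1 + θ) * (α₁ + α₂ * p.1.1) + γ₁),
        fun p => p.1.2.2.1,
        fun p => p.1.2.2.2,
        fun _ => (1 : ℝ)]))) = 5 := by
  have hD : ∀ z : ℝ, 0 ≤ z → 0 < (1 + θ) * (α₁ + α₂ * z) + γ₁ := by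
    intro z hz
    nlinarith [mul_nonneg hθ hα₁, mul_nonneg hα₂.le hz,
      mul_nonneg hθ (mul_nonneg hα₂.le hz)]
  have hLI : LinearIndependent ℝ
      (![fun p : {p : ℝ × ℝ × ℝ × ℝ // 0 ≤ p.1} =>
          p.1.1 * ((α₀ + α₃ * p.1.2.1 - γ₀ - γ₂ * p.1.2.2.1 - γ₃ * p.1.2.2.2) /
            ((1 + θ) * (α₁ + α₂ * p.1.1) + γ₁)),
        fun p => (α₀ + α₃ * p.1.2.1 - γ₀ - γ₂ * p.1.2.2.1 - γ₃ * p.1.2.2.2) /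
            ((1 + θ) * (α₁ + α₂ * p.1.1) + γ₁),
        fun p => p.1.2.2.1,
        fun p => p.1.2.2.2,
        fun _ => (1 : ℝ)] : Fin 5 → ({p : ℝ × ℝ × ℝ × ℝ // 0 ≤ p.1} → ℝ)) := by
    rw [Fintype.linearIndependent_iff]
    intro c hc
    have key : ∀ z y w r : ℝ, (hz : 0 ≤ z) →
        c 0 * (z * ((α₀ + α₃ * y - γ₀ - γ₂ * w - γ₃ * r) /
            ((1 + θ) * (α₁ + α₂ * z) + γ₁)))
        + c 1 * ((α₀ + α₃ * y - γ₀ - γ₂ * w - γ₃ * r) /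
            ((1 + θ) * (α₁ + α₂ * z) + γ₁))
        + c 2 * w + c 3 * r + c 4 = 0 := by
      intro z y w r hz
      have := congrFun hc ⟨(z, y, w, r), hz⟩
      simpa [Fin.sum_univ_five] using this
    have hnum : ∀ k : ℝ, α₀ + α₃ * ((k + γ₀ - α₀) / α₃) - γ₀ = k := by
      intro k; field_simp; ring
    -- c 4 = 0
    have h4 : c 4 = 0 := by
      have := key 0 ((0 + γ₀ - α₀) / α₃) 0 0 le_rfl
      rw [show α₀ + α₃ * ((0 + γ₀ - α₀) / α₃) - γ₀ - γ₂ * 0 - γ₃ * 0 = 0 by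
        have := hnum 0; linarith] at this
      simpa using this
    -- c 2 = 0
    have h2 : c 2 = 0 := by
      have := key 0 ((γ₂ + γ₀ - α₀) / α₃) 1 0 le_rfl
      rw [show α₀ + α₃ * ((γ₂ + γ₀ - α₀) / α₃) - γ₀ - γ₂ * 1 - γ₃ * 0 = 0 by
        have := hnum γ₂; linarith] at this
      simp at this; linarith
    -- c 3 = 0
    have h3 : c 3 = 0 := by
      have := key 0 ((γ₃ + γ₀ - α₀) / α₃) 0 1 le_rfl
      rw [show α₀ + α₃ * ((γ₃ + γ₀ - α₀) / α₃) - γ₀ - γ₂ * 0 - γ₃ * 1 = 0 by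
        have := hnum γ₃; linarith] at this
      simp at this; linarith
    have hD0 : ((1 + θ) * (α₁ + α₂ * 0) + γ₁) ≠ 0 := (hD 0 le_rfl).ne'
    have hD1 : ((1 + θ) * (α₁ + α₂ * 1) + γ₁) ≠ 0 := (hD 1 zero_le_one).ne'
    -- c 1 = 0
    have h1 : c 1 = 0 := by
      have := key 0 ((1 + γ₀ - α₀) / α₃) 0 0 le_rfl
      rw [show α₀ + α₃ * ((1 + γ₀ - α₀) / α₃) - γ₀ - γ₂ * 0 - γ₃ * 0 = 1 by
        have := hnum 1; linarith] at this
      rw [h4] at this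
      simp at this
      rcases this with h | h
      · exact h
      · exact absurd h (by simpa using hD0)
    -- c 0 = 0
    have h0 : c 0 = 0 := by
      have := key 1 ((1 + γ₀ - α₀) / α₃) 0 0 zero_le_one
      rw [show α₀ + α₃ * ((1 + γ₀ - α₀) / α₃) - γ₀ - γ₂ * 0 - γ₃ * 0 = 1 by
        have := hnum 1; linarith] at this
      rw [h4, h1] at this
      simp at this
      rcases this with h | h
      · exact h
      · exact absurd h (by simpa using hD1)
    intro i
    fin_cases i <;> assumption
  have := finrank_span_eq_card hLI
  simpa using this
end
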